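/- arXiv:2312.02332 — 2 statements merged into one kernel-verified Lean document; each statement's English description precedes it below -/
import Mathlib

section
/- In a rooted forest represented by parent pointers on a finite vertex set, one parallel round of pointer jumping (replacing each vertex's parent by its grandparent: v.p ← v.p.p) reduces the distance from any vertex at distance δ ≥ 2 from its root to at most ⌈2δ/3⌉. Consequently, after ⌈log_{3/2} h⌉ rounds of pointer jumping applied to a forest of height at most h, every vertex is at distance at most 1 from its root. -/
/-- The distance from `v` to its root in the forest given by parent pointers `p`:
the least `k` with `p^[k] v` a fixed point of `p`. -/
noncomputable def depth {V : Type} (p : V → V) (v : V) : ℕ :=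
  sInf {k | p (p^[k] v) = p^[k] v}

/-- One parallel round of pointer jumping: every vertex's parent becomes its
grandparent. -/
def jump {V : Type} (p : V → V) : V → V := fun v => p (p v)

section Aux

variable {V : Type} {p : V → V}

/-- The fixed-point set is upward closed. -/
lemma fix_succ {v : V} {k : ℕ} (h : p (p^[k] v) = p^[k] v) :
    p (p^[k+1] v) = p^[k+1] v := by
  rw [Function.iterate_succ_apply', h]
  exact h

lemma fix_of_depth_le (hforest : ∀ v, ∃ k, p (p^[k] v) = p^[k] v)
    (v : V) {m : ℕ} (hm : depth p v ≤ m) : p (p^[m] v) = p^[m] v := by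
  have hne : {k | p (p^[k] v) = p^[k] v}.Nonempty := hforest v
  have hmem : p (p^[depth p v] v) = p^[depth p v] v := Nat.sInf_mem hne
  obtain ⟨j, rfl⟩ := Nat.exists_eq_add_of_le hm
  induction j with
  | zero => exact hmem
  | succ n ih => exact fix_succ (ih (Nat.le_add_right _ _))

lemma jump_iter (t : ℕ) (p : V → V) : jump^[t] p = p^[2^t] := by
  induction t generalizing p with
  | zero => simp
  | succ n ih =>
    rw [Function.iterate_succ_apply, ih]
    funext v
    show (jump p)^[2^n] v = p^[2^(n+1)] v
    have h1 : jump p = p^[2] := by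
      funext w
      simp [jump, Function.iterate_succ_apply']
    rw [h1, ← Function.iterate_mul]
    congr 1
    ring

lemma depth_pow_le (hforest : ∀ v, ∃ k, p (p^[k] v) = p^[k] v)
    (v : V) {m c : ℕ} (h : depth p v ≤ m * c) : depth (p^[m]) v ≤ c := by
  apply Nat.sInf_le
  show p^[m] ((p^[m])^[c] v) = (p^[m])^[c] v
  rw [← Function.iterate_mul]
  have hfix : p (p^[m * c] v) = p^[m * c] v := fix_of_depth_le hforest v h
  have : ∀ j, p^[j] (p^[m*c] v) = p^[m*c] v := by
    intro j
    induction j with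
    | zero => rfl
    | succ n ih => rw [Function.iterate_succ_apply', ih, hfix]
  exact this m

end Aux

/-- In a rooted forest on a finite vertex set given by parent pointers, one round of
pointer jumping reduces the distance of any vertex at distance `δ ≥ 2` from its root to
at most `⌈2δ/3⌉`; consequently, after `⌈log_{3/2} h⌉` rounds of pointer jumping applied
to a forest of height at most `h`, every vertex is at distance at most `1` from its
root. -/
theorem pointer_jumping {V : Type} [Fintype V] (p : V → V)
    (hforest : ∀ v, ∃ k, p (p^[k] v) = p^[k] v) :
    (∀ v, 2 ≤ depth p v → depth (jump p) v ≤ (2 * depth p v + 2) / 3) ∧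
    (∀ h : ℕ, (∀ v, depth p v ≤ h) →
      ∀ v, depth (jump^[⌈Real.logb (3 / 2) h⌉₊] p) v ≤ 1) := by
  have hjump2 : jump p = p^[2] := by
    funext w
    simp [jump, Function.iterate_succ_apply']
  constructor
  · intro v hd
    rw [hjump2]
    apply depth_pow_le hforest
    omega
  · intro h hh v
    rw [jump_iter]
    apply depth_pow_le hforest
    have hd : depth p v ≤ h := hh v
    have hpow : h ≤ 2 ^ ⌈Real.logb (3 / 2) h⌉₊ := by
      rcases Nat.eq_zero_or_pos h with h0 | h1
      · subst h0; positivity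
      · set t := ⌈Real.logb (3 / 2) (h : ℝ)⌉₊ with ht
        have hlogle : Real.logb 2 h ≤ Real.logb (3/2) h := by
          unfold Real.logb
          apply div_le_div_of_nonneg_left
          · exact Real.log_nonneg (by exact_mod_cast h1)
          · apply Real.log_pos; norm_num
          · apply Real.log_le_log (by norm_num) (by norm_num)
        have hle : Real.logb 2 h ≤ (t : ℝ) := hlogle.trans (Nat.le_ceil _)
        have : (h : ℝ) ≤ (2 : ℝ) ^ (t : ℝ) := by
          calc (h : ℝ) = (2:ℝ) ^ Real.logb 2 h := by
                rw [Real.rpow_logb (by norm_num) (by norm_num) (by exact_mod_cast h1)]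
          _ ≤ (2:ℝ) ^ (t : ℝ) := Real.rpow_le_rpow_of_exponent_le (by norm_num) hle
        have h2 : (h : ℝ) ≤ ((2^t : ℕ) : ℝ) := by
          rwa [Nat.cast_pow, Nat.cast_ofNat, ← Real.rpow_natCast]
        exact_mod_cast h2
    calc depth p v ≤ h := hd
    _ ≤ 2 ^ ⌈Real.logb (3 / 2) h⌉₊ * 1 := by simpa using hpow
end

section
/- Cheeger's inequality for multigraphs: for a finite connected multigraph G, the spectral gap λ (second-smallest eigenvalue of the normalized Laplacian) and the conductance φ(G) satisfy λ ≥ φ(G)²/2. -/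
/-- Degree of a vertex in a multigraph with multiplicities `w`. -/
noncomputable def degRe {V : Type} [Fintype V] (w : V → V → ℕ) (v : V) : ℝ :=
  ∑ u, (w v u : ℝ)

/-- The normalized Laplacian of the multigraph with edge multiplicities `w`. -/
noncomputable def normLap {V : Type} [Fintype V] [DecidableEq V] (w : V → V → ℕ) :
    Matrix V V ℝ :=
  Matrix.of fun u v =>
    if u = v then (if degRe w v = 0 then 0 else 1 - (w v v : ℝ) / degRe w v)
    else -(w u v : ℝ) / Real.sqrt (degRe w u * degRe w v)

/-- Second-smallest eigenvalue of a Hermitian real matrix: entry `1` of the list of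
eigenvalues sorted increasingly. -/
noncomputable def secondSmallest {V : Type} [Fintype V] [DecidableEq V]
    {M : Matrix V V ℝ} (hM : M.IsHermitian) : ℝ :=
  (Multiset.sort ((Finset.univ.val : Multiset V).map hM.eigenvalues) (· ≤ ·)).getD 1 0

/-- Volume of a vertex subset: sum of degrees. -/
noncomputable def vol {V : Type} [Fintype V] (w : V → V → ℕ) (S : Finset V) : ℝ :=
  ∑ v ∈ S, ∑ u, (w v u : ℝ)

/-- Number of edges crossing the cut `(S, S̄)`. -/
noncomputable def cutVal {V : Type} [Fintype V] [DecidableEq V] (w : V → V → ℕ)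
    (S : Finset V) : ℝ :=
  ∑ u ∈ S, ∑ v ∈ Sᶜ, (w u v : ℝ)

/-- Conductance `φ(G) = min { |E(S,S̄)|/vol(S) : vol(S) ≤ vol(V)/2 }`. -/
noncomputable def conductance {V : Type} [Fintype V] [DecidableEq V]
    (w : V → V → ℕ) : ℝ :=
  sInf {r | ∃ S : Finset V, 0 < vol w S ∧ 2 * vol w S ≤ vol w Finset.univ ∧
    r = cutVal w S / vol w S}

/-!
The eigenvector of the second eigenvalue `λ`, rescaled as `g = D^{-1/2} x`, is a function with
`∑ deg(v) g(v) = 0` and Rayleigh quotient `E(g) / ∑ deg(v) g(v)² ≤ λ`, where `E` is the Dirichlet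
form. Shifting `g` by a weighted median and keeping its positive or its negative part gives a
function `f` with Rayleigh quotient still at most `λ` and support of at most half the volume.
The co-area argument (peeling off the level sets of `f²` one value at a time) bounds
`2 φ ∑ deg(v) f(v)²` by `∑ w(u,v) |f(u)² - f(v)²|`, and Cauchy–Schwarz bounds the square of the
latter by `8 E(f) ∑ deg(v) f(v)²`. Together, `φ² ≤ 2λ`.
-/

open Finset Matrix

lemma abs_sub_eq_abs_min_sub_min_add_abs_max_sub_max (x y m : ℝ) :
    |x - y| = |min x m - min y m| + |max (x - m) 0 - max (y - m) 0| := by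
  grind

lemma sq_posPart_sub_add_sq_negPart_sub_le (a b : ℝ) :
    (a⁺ - b⁺) ^ 2 + (a⁻ - b⁻) ^ 2 ≤ (a - b) ^ 2 := by
  rcases le_total a 0 with ha | ha <;> rcases le_total b 0 with hb | hb <;>
    simp [ha, hb] <;> nlinarith

lemma sq_posPart_add_sq_negPart (a : ℝ) : a⁺ ^ 2 + a⁻ ^ 2 = a ^ 2 := by
  rcases le_total a 0 with ha | ha <;> simp [ha]

lemma pos_and_le_mul_or_of_add_le_mul {a₁ a₂ b₁ b₂ μ : ℝ} (ha₁ : 0 ≤ a₁) (ha₂ : 0 ≤ a₂)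
    (hb₁ : 0 ≤ b₁) (hb₂ : 0 ≤ b₂) (hb : 0 < b₁ + b₂) (h : a₁ + a₂ ≤ μ * (b₁ + b₂)) :
    (0 < b₁ ∧ a₁ ≤ μ * b₁) ∨ (0 < b₂ ∧ a₂ ≤ μ * b₂) := by
  by_contra! hcon
  rcases hb₁.eq_or_lt with rfl | hb₁ <;> rcases hb₂.eq_or_lt with rfl | hb₂
  · linarith
  · linarith [hcon.2 hb₂]
  · linarith [hcon.1 hb₁]
  · linarith [hcon.1 hb₁, hcon.2 hb₂]

section

variable {V : Type} [Fintype V] (w : V → V → ℕ)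

noncomputable def dirichletForm (f : V → ℝ) : ℝ :=
  1 / 2 * ∑ u, ∑ v, (w u v : ℝ) * (f u - f v) ^ 2

noncomputable def degNormSq (f : V → ℝ) : ℝ :=
  ∑ v, degRe w v * f v ^ 2

lemma degRe_nonneg (v : V) : 0 ≤ degRe w v := by
  unfold degRe; positivity

lemma vol_eq_sum_degRe (S : Finset V) : vol w S = ∑ v ∈ S, degRe w v := rfl

lemma vol_nonneg (S : Finset V) : 0 ≤ vol w S :=
  sum_nonneg fun v _ => degRe_nonneg w v

lemma vol_mono {S T : Finset V} (h : S ⊆ T) : vol w S ≤ vol w T :=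
  sum_le_sum_of_subset_of_nonneg h fun v _ _ => degRe_nonneg w v

lemma dirichletForm_nonneg (f : V → ℝ) : 0 ≤ dirichletForm w f := by
  unfold dirichletForm; positivity

lemma degNormSq_nonneg (f : V → ℝ) : 0 ≤ degNormSq w f :=
  sum_nonneg fun v _ => mul_nonneg (degRe_nonneg w v) (sq_nonneg _)

lemma sum_sum_mul_sq_add_sq (hsym : ∀ u v, w u v = w v u) (f : V → ℝ) :
    ∑ u, ∑ v, (w u v : ℝ) * (f u ^ 2 + f v ^ 2) = 2 * degNormSq w f := by
  have hrow : ∑ u, ∑ v, (w u v : ℝ) * f u ^ 2 = degNormSq w f := by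
    simp only [degNormSq, degRe, sum_mul]
  have hcol : ∑ u, ∑ v, (w u v : ℝ) * f v ^ 2 = degNormSq w f := by
    rw [sum_comm, ← hrow]
    exact sum_congr rfl fun u _ => sum_congr rfl fun v _ => by rw [hsym]
  simp only [mul_add, sum_add_distrib, hrow, hcol]
  ring

lemma dirichletForm_eq_degNormSq_sub (hsym : ∀ u v, w u v = w v u) (f : V → ℝ) :
    dirichletForm w f = degNormSq w f - ∑ u, ∑ v, (w u v : ℝ) * (f u * f v) := by
  have hexpand : ∑ u, ∑ v, (w u v : ℝ) * (f u - f v) ^ 2 = ∑ u, ∑ v, (w u v : ℝ) *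
      (f u ^ 2 + f v ^ 2) - 2 * ∑ u, ∑ v, (w u v : ℝ) * (f u * f v) := by
    simp only [mul_sum, ← sum_sub_distrib]
    exact sum_congr rfl fun u _ => sum_congr rfl fun v _ => by ring
  rw [dirichletForm, hexpand, sum_sum_mul_sq_add_sq w hsym]
  ring

lemma degNormSq_div_sqrt_degRe (hd : ∀ v, 0 < degRe w v) (x : V → ℝ) :
    degNormSq w (fun v => x v / √(degRe w v)) = x ⬝ᵥ x := by
  refine sum_congr rfl fun v _ => ?_
  rw [div_pow, Real.sq_sqrt (degRe_nonneg w v), mul_div_cancel₀ _ (hd v).ne', sq]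

lemma sq_sum_sum_mul_abs_sq_sub_sq_le (hsym : ∀ u v, w u v = w v u) (f : V → ℝ) :
    (∑ u, ∑ v, (w u v : ℝ) * |f u ^ 2 - f v ^ 2|) ^ 2 ≤
      8 * dirichletForm w f * degNormSq w f := by
  have hcs := sum_sq_le_sum_mul_sum_of_sq_le_mul (univ : Finset (V × V))
    (r := fun p => (w p.1 p.2 : ℝ) * |f p.1 ^ 2 - f p.2 ^ 2|)
    (f := fun p => (w p.1 p.2 : ℝ) * (f p.1 - f p.2) ^ 2)
    (g := fun p => 2 * ((w p.1 p.2 : ℝ) * (f p.1 ^ 2 + f p.2 ^ 2)))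
    (fun _ _ => by positivity) (fun _ _ => by positivity) fun p _ => by
      have hw : (0 : ℝ) ≤ w p.1 p.2 := Nat.cast_nonneg _
      calc ((w p.1 p.2 : ℝ) * |f p.1 ^ 2 - f p.2 ^ 2|) ^ 2
          = (w p.1 p.2 * (f p.1 - f p.2) ^ 2) * (w p.1 p.2 * (f p.1 + f p.2) ^ 2) := by
            rw [mul_pow, sq_abs]; ring
        _ ≤ _ := mul_le_mul_of_nonneg_left
            (by nlinarith [mul_nonneg hw (sq_nonneg (f p.1 - f p.2))]) (by positivity)
  simp only [Fintype.sum_prod_type, ← mul_sum, sum_sum_mul_sq_add_sq w hsym] at hcs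
  unfold dirichletForm
  linarith

lemma exists_median [Nonempty V] (g : V → ℝ) :
    ∃ c, 2 * vol w (univ.filter (c < g ·)) ≤ vol w univ ∧
      2 * vol w (univ.filter (g · < c)) ≤ vol w univ := by
  have hsplit : ∀ t, vol w (univ.filter (t ≤ g ·)) + vol w (univ.filter (g · < t)) =
      vol w univ := fun t => by
    simpa only [vol_eq_sum_degRe, not_le] using
      sum_filter_add_sum_filter_not univ (t ≤ g ·) (degRe w)
  -- `c` will be the largest value of `g` whose upper level set carries at least half
  -- the volume.
  set A := univ.filter fun v => vol w univ ≤ 2 * vol w (univ.filter (g v ≤ g ·))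
  obtain ⟨v₁, -, hv₁⟩ := univ.exists_min_image g univ_nonempty
  have hA : A.Nonempty := ⟨v₁, mem_filter.2 ⟨mem_univ _, by
    rw [filter_true_of_mem fun v _ => hv₁ v (mem_univ v)]
    linarith [vol_nonneg w univ]⟩⟩
  obtain ⟨v₀, hv₀A, hv₀⟩ := A.exists_max_image g hA
  refine ⟨g v₀, ?_, by linarith [hsplit (g v₀), (mem_filter.1 hv₀A).2]⟩
  set S := univ.filter (g v₀ < g ·)
  rcases S.eq_empty_or_nonempty with hS | hS
  · simpa [hS, vol] using vol_nonneg w univ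
  obtain ⟨u, huS, hu⟩ := S.exists_min_image g hS
  have hSu : univ.filter (g u ≤ g ·) = S := by
    ext v
    simp only [S, mem_filter, mem_univ, true_and]
    exact ⟨fun h => (mem_filter.1 huS).2.trans_le h, fun h => hu v (by simp [S, h])⟩
  have huA : u ∉ A := fun h => not_lt_of_ge (hv₀ u h) (mem_filter.1 huS).2
  simp only [A, mem_filter, mem_univ, true_and, not_le, hSu] at huA
  exact huA.le

lemma dirichletForm_posPart_add_dirichletForm_negPart_le (f : V → ℝ) :
    dirichletForm w f⁺ + dirichletForm w f⁻ ≤ dirichletForm w f := by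
  simp only [dirichletForm, ← mul_add, ← sum_add_distrib, Pi.posPart_apply, Pi.negPart_apply]
  gcongr with u _ v _
  exact sq_posPart_sub_add_sq_negPart_sub_le _ _

lemma degNormSq_posPart_add_degNormSq_negPart (f : V → ℝ) :
    degNormSq w f⁺ + degNormSq w f⁻ = degNormSq w f := by
  simp only [degNormSq, ← sum_add_distrib, Pi.posPart_apply, Pi.negPart_apply, ← mul_add,
    sq_posPart_add_sq_negPart]

lemma dirichletForm_sub_const (g : V → ℝ) (c : ℝ) :
    dirichletForm w (fun v => g v - c) = dirichletForm w g := by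
  simp only [dirichletForm, sub_sub_sub_cancel_right]

lemma degNormSq_le_degNormSq_sub_const {g : V → ℝ} (hg₀ : ∑ v, degRe w v * g v = 0) (c : ℝ) :
    degNormSq w g ≤ degNormSq w (fun v => g v - c) := by
  have hexpand : degNormSq w (fun v => g v - c) =
      degNormSq w g - 2 * c * ∑ v, degRe w v * g v + c ^ 2 * vol w univ := by
    simp only [degNormSq, vol_eq_sum_degRe, mul_sum, ← sum_sub_distrib, ← sum_add_distrib]
    exact sum_congr rfl fun v _ => by ring
  rw [hexpand, hg₀]
  nlinarith [vol_nonneg w univ, sq_nonneg c]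

lemma exists_half_support_dirichletForm_le [Nonempty V] {μ : ℝ} (g : V → ℝ)
    (hg₀ : ∑ v, degRe w v * g v = 0) (hpos : 0 < degNormSq w g)
    (hg : dirichletForm w g ≤ μ * degNormSq w g) :
    ∃ f : V → ℝ, 2 * vol w (univ.filter (f · ≠ 0)) ≤ vol w univ ∧
      0 < degNormSq w f ∧ dirichletForm w f ≤ μ * degNormSq w f := by
  obtain ⟨c, hup, hlow⟩ := exists_median w g
  set h := fun v => g v - c
  have hμ : 0 ≤ μ := nonneg_of_mul_nonneg_left ((dirichletForm_nonneg w g).trans hg) hpos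
  have hgh := degNormSq_le_degNormSq_sub_const w hg₀ c
  have hh : dirichletForm w h ≤ μ * degNormSq w h := by
    rw [dirichletForm_sub_const]
    exact hg.trans (mul_le_mul_of_nonneg_left hgh hμ)
  rw [← degNormSq_posPart_add_degNormSq_negPart w h] at hh hgh
  rcases pos_and_le_mul_or_of_add_le_mul (dirichletForm_nonneg w _) (dirichletForm_nonneg w _)
    (degNormSq_nonneg w _) (degNormSq_nonneg w _) (hpos.trans_le hgh)
    ((dirichletForm_posPart_add_dirichletForm_negPart_le w h).trans hh)
    with ⟨hpos', hle⟩ | ⟨hpos', hle⟩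
  · refine ⟨h⁺, ?_, hpos', hle⟩
    simpa [h, posPart_eq_zero] using hup
  · refine ⟨h⁻, ?_, hpos', hle⟩
    simpa [h, negPart_eq_zero] using hlow

lemma degRe_pos_of_connected {G : SimpleGraph V} (hG : ∀ u v, G.Adj u v → 0 < w u v)
    (hconn : G.Connected) (hcard : 1 < Fintype.card V) (v : V) : 0 < degRe w v := by
  have : Nontrivial V := Fintype.one_lt_card_iff_nontrivial.1 hcard
  obtain ⟨u, huv⟩ := hconn.preconnected.exists_adj_of_nontrivial v
  exact (Nat.cast_pos.2 (hG v u huv)).trans_le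
    (single_le_sum (fun u _ => Nat.cast_nonneg (w v u)) (mem_univ u))

end

section

variable {V : Type} [Fintype V] [DecidableEq V]

lemma exists_two_eigenvalues_le_secondSmallest {M : Matrix V V ℝ} (hM : M.IsHermitian)
    (hcard : 1 < Fintype.card V) :
    ∃ i j, i ≠ j ∧ hM.eigenvalues i ≤ secondSmallest hM ∧
      hM.eigenvalues j ≤ secondSmallest hM := by
  set l := Multiset.sort ((univ.val : Multiset V).map hM.eigenvalues) (· ≤ ·) with hl
  have hlen : l.length = Fintype.card V := by
    rw [hl, Multiset.length_sort, Multiset.card_map]; rfl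
  have hsorted : l.Pairwise (· ≤ ·) := Multiset.pairwise_sort _ _
  have hcoe : (l : Multiset ℝ) = (univ.val : Multiset V).map hM.eigenvalues :=
    Multiset.sort_eq _ _
  rcases hcons : l with _ | ⟨a, _ | ⟨b, t⟩⟩
  · simp [hcons] at hlen; omega
  · simp [hcons] at hlen; omega
  rw [hcons] at hsorted hcoe
  have hsecond : secondSmallest hM = b := by rw [secondSmallest, ← hl, hcons]; rfl
  obtain ⟨i, hi, rfl, hrest⟩ := (Multiset.map_eq_cons _ _ _ _).2 (hcoe.symm.trans (Multiset.cons_coe a (b :: t)).symm)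
  obtain ⟨j, hj, rfl, -⟩ := (Multiset.map_eq_cons _ _ _ _).2 (hrest.trans (Multiset.cons_coe b t).symm)
  refine ⟨j, i, (univ.nodup.mem_erase_iff.1 hj).1, hsecond.ge, ?_⟩
  rw [hsecond]
  exact List.rel_of_pairwise_cons hsorted (by simp)

lemma dotProduct_eigenvectorBasis {M : Matrix V V ℝ} (hM : M.IsHermitian) (i j : V) :
    ⇑(hM.eigenvectorBasis i) ⬝ᵥ ⇑(hM.eigenvectorBasis j) = if i = j then 1 else 0 := by
  rw [← orthonormal_iff_ite.1 hM.eigenvectorBasis.orthonormal i j,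
    EuclideanSpace.inner_eq_star_dotProduct, star_trivial, dotProduct_comm]

lemma exists_orthogonal_dotProduct_mulVec_le {M : Matrix V V ℝ} (hM : M.IsHermitian)
    {i j : V} (hij : i ≠ j) (y : V → ℝ) :
    ∃ x : V → ℝ, x ≠ 0 ∧ y ⬝ᵥ x = 0 ∧
      x ⬝ᵥ M *ᵥ x ≤ max (hM.eigenvalues i) (hM.eigenvalues j) * (x ⬝ᵥ x) := by
  set b : V → V → ℝ := fun k => ⇑(hM.eigenvectorBasis k)
  have hb : ∀ k l, b k ⬝ᵥ b l = if k = l then 1 else 0 := dotProduct_eigenvectorBasis hM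
  have hMb : ∀ k, M *ᵥ b k = hM.eigenvalues k • b k := hM.mulVec_eigenvectorBasis
  obtain ⟨c₁, c₂, hc, hyc⟩ : ∃ c₁ c₂ : ℝ, (c₁, c₂) ≠ 0 ∧ c₁ * (y ⬝ᵥ b i) + c₂ * (y ⬝ᵥ b j) = 0 := by
    by_cases h : (y ⬝ᵥ b j, -(y ⬝ᵥ b i)) = 0
    · exact ⟨1, 0, by simp, by simp_all⟩
    · exact ⟨_, _, h, by ring⟩
  set x := c₁ • b i + c₂ • b j
  have hxx : x ⬝ᵥ x = c₁ ^ 2 + c₂ ^ 2 := by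
    simp [x, hb, hij, hij.symm, add_dotProduct, dotProduct_add]; ring
  have hxMx : x ⬝ᵥ M *ᵥ x = c₁ ^ 2 * hM.eigenvalues i + c₂ ^ 2 * hM.eigenvalues j := by
    simp [x, hb, hMb, hij, hij.symm, mulVec_add, mulVec_smul, add_dotProduct, dotProduct_add]
    ring
  refine ⟨x, ?_, ?_, ?_⟩
  · intro hx
    have : c₁ ^ 2 + c₂ ^ 2 = 0 := by rw [← hxx, hx, zero_dotProduct]
    exact hc (by simp only [Prod.mk_eq_zero]; constructor <;> nlinarith)
  · simpa [x, dotProduct_add] using hyc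
  · rw [hxMx, hxx]
    nlinarith [le_max_left (hM.eigenvalues i) (hM.eigenvalues j),
      le_max_right (hM.eigenvalues i) (hM.eigenvalues j), sq_nonneg c₁, sq_nonneg c₂]

lemma exists_orthogonal_dotProduct_mulVec_le_secondSmallest {M : Matrix V V ℝ}
    (hM : M.IsHermitian) (hcard : 1 < Fintype.card V) (y : V → ℝ) :
    ∃ x : V → ℝ, x ≠ 0 ∧ y ⬝ᵥ x = 0 ∧ x ⬝ᵥ M *ᵥ x ≤ secondSmallest hM * (x ⬝ᵥ x) := by
  obtain ⟨i, j, hij, hi, hj⟩ := exists_two_eigenvalues_le_secondSmallest hM hcard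
  obtain ⟨x, hx0, hyx, hx⟩ := exists_orthogonal_dotProduct_mulVec_le hM hij y
  exact ⟨x, hx0, hyx, hx.trans (mul_le_mul_of_nonneg_right (max_le hi hj)
    (dotProduct_self_star_nonneg x))⟩

lemma secondSmallest_eq_zero_of_card_le_one {M : Matrix V V ℝ} (hM : M.IsHermitian)
    (hcard : Fintype.card V ≤ 1) : secondSmallest hM = 0 := by
  apply List.getD_eq_default
  rw [Multiset.length_sort, Multiset.card_map]
  exact hcard

variable (w : V → V → ℕ)

lemma normLap_apply_of_degRe_pos (hd : ∀ v, 0 < degRe w v) (u v : V) :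
    normLap w u v =
      (if u = v then 1 else 0) - w u v / (√(degRe w u) * √(degRe w v)) := by
  by_cases huv : u = v
  · subst huv
    simp [normLap, (hd u).ne', Real.mul_self_sqrt (degRe_nonneg w u)]
  · simp [normLap, huv, Real.sqrt_mul (degRe_nonneg w u), neg_div]

lemma dotProduct_normLap_mulVec (hsym : ∀ u v, w u v = w v u) (hd : ∀ v, 0 < degRe w v)
    (x : V → ℝ) :
    x ⬝ᵥ normLap w *ᵥ x = dirichletForm w (fun v => x v / √(degRe w v)) := by
  rw [dirichletForm_eq_degNormSq_sub w hsym, degNormSq_div_sqrt_degRe w hd]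
  have hentry : ∀ u v, x u * (normLap w u v * x v) = (if u = v then x u * x v else 0) -
      w u v * (x u / √(degRe w u) * (x v / √(degRe w v))) := by
    intro u v
    rw [normLap_apply_of_degRe_pos w hd]
    split_ifs <;> ring
  simp only [dotProduct, mulVec, mul_sum, hentry, sum_sub_distrib, sum_ite_eq, mem_univ,
    if_true]

lemma exists_dirichletForm_le_secondSmallest (hsym : ∀ u v, w u v = w v u)
    (hd : ∀ v, 0 < degRe w v) (hL : (normLap w).IsHermitian) (hcard : 1 < Fintype.card V) :
    ∃ g : V → ℝ, ∑ v, degRe w v * g v = 0 ∧ 0 < degNormSq w g ∧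
      dirichletForm w g ≤ secondSmallest hL * degNormSq w g := by
  obtain ⟨x, hx0, hxy, hx⟩ :=
    exists_orthogonal_dotProduct_mulVec_le_secondSmallest hL hcard (fun v => √(degRe w v))
  refine ⟨fun v => x v / √(degRe w v), ?_, ?_, ?_⟩
  · rw [← hxy]
    exact sum_congr rfl fun v _ => by rw [mul_div_left_comm, Real.div_sqrt, mul_comm]
  · rw [degNormSq_div_sqrt_degRe w hd]
    exact (dotProduct_self_star_nonneg x).lt_of_ne' (mt dotProduct_self_eq_zero.1 hx0)
  · rwa [degNormSq_div_sqrt_degRe w hd, ← dotProduct_normLap_mulVec w hsym hd]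

lemma cutVal_nonneg (S : Finset V) : 0 ≤ cutVal w S := by
  unfold cutVal; positivity

lemma zero_mem_lowerBounds_conductance_set :
    0 ∈ lowerBounds {r | ∃ S : Finset V, 0 < vol w S ∧ 2 * vol w S ≤ vol w univ ∧
      r = cutVal w S / vol w S} := by
  rintro r ⟨S, hS, -, rfl⟩
  exact div_nonneg (cutVal_nonneg w S) hS.le

lemma conductance_nonneg : 0 ≤ conductance w :=
  Real.sInf_nonneg (zero_mem_lowerBounds_conductance_set w)

lemma conductance_mul_vol_le_cutVal {S : Finset V} (hS : 2 * vol w S ≤ vol w univ) :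
    conductance w * vol w S ≤ cutVal w S := by
  rcases (vol_nonneg w S).eq_or_lt with h0 | hpos
  · rw [← h0, mul_zero]
    exact cutVal_nonneg w S
  · rw [← le_div_iff₀ hpos]
    exact csInf_le ⟨0, zero_mem_lowerBounds_conductance_set w⟩ ⟨S, hpos, hS, rfl⟩

lemma conductance_eq_zero_of_card_le_one (hcard : Fintype.card V ≤ 1) :
    conductance w = 0 := by
  have : Subsingleton V := Fintype.card_le_one_iff_subsingleton.1 hcard
  refine le_antisymm (Real.sInf_nonpos fun r hr => ?_) (conductance_nonneg w)
  obtain ⟨S, hpos, hS, -⟩ := hr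
  rcases S.eq_empty_or_nonempty with rfl | hne
  · simp [vol] at hpos
  · rw [hne.eq_univ] at hpos hS
    linarith

lemma sum_sum_mul_abs_indicator_sub (hsym : ∀ u v, w u v = w v u) (S : Finset V) :
    ∑ u, ∑ v, (w u v : ℝ) * |(if u ∈ S then 1 else 0) - (if v ∈ S then 1 else 0)| =
      2 * cutVal w S := by
  have hsplit : ∀ u v, (w u v : ℝ) * |(if u ∈ S then 1 else 0) - (if v ∈ S then 1 else 0)| =
      (if u ∈ S then if v ∈ Sᶜ then (w u v : ℝ) else 0 else 0) +
        (if v ∈ S then if u ∈ Sᶜ then (w v u : ℝ) else 0 else 0) := by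
    intro u v
    by_cases hu : u ∈ S <;> by_cases hv : v ∈ S <;> simp [hu, hv, hsym u v]
  have hcut : ∑ u, ∑ v, (if u ∈ S then if v ∈ Sᶜ then (w u v : ℝ) else 0 else 0) =
      cutVal w S := by
    simp only [sum_ite_irrel, sum_const_zero, sum_ite_mem, univ_inter]
    rfl
  simp only [hsplit, sum_add_distrib]
  rw [sum_comm (f := fun u v => if v ∈ S then _ else 0), hcut]
  ring

lemma sum_degRe_mul_eq_of_min_eq {a : V → ℝ} {m : ℝ} {S : Finset V}
    (hmin : ∀ v, min (a v) m = m * (if v ∈ S then 1 else 0)) :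
    ∑ v, degRe w v * a v = vol w S * m + ∑ v, degRe w v * max (a v - m) 0 := by
  calc ∑ v, degRe w v * a v
      = ∑ v, degRe w v * (m * (if v ∈ S then 1 else 0) + max (a v - m) 0) :=
        sum_congr rfl fun v _ => by rw [← hmin]; grind
    _ = vol w S * m + ∑ v, degRe w v * max (a v - m) 0 := by
        simp only [mul_add, sum_add_distrib, mul_ite, mul_one, mul_zero, sum_ite_mem,
          univ_inter, vol_eq_sum_degRe, ← sum_mul]

lemma sum_sum_mul_abs_sub_eq_of_min_eq (hsym : ∀ u v, w u v = w v u) {a : V → ℝ} {m : ℝ}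
    (hm : 0 ≤ m) {S : Finset V} (hmin : ∀ v, min (a v) m = m * (if v ∈ S then 1 else 0)) :
    ∑ u, ∑ v, (w u v : ℝ) * |a u - a v| = m * (2 * cutVal w S) +
      ∑ u, ∑ v, (w u v : ℝ) * |max (a u - m) 0 - max (a v - m) 0| := by
  rw [← sum_sum_mul_abs_indicator_sub w hsym, mul_sum, ← sum_add_distrib]
  refine sum_congr rfl fun u _ => ?_
  rw [mul_sum, ← sum_add_distrib]
  refine sum_congr rfl fun v _ => ?_
  rw [abs_sub_eq_abs_min_sub_min_add_abs_max_sub_max _ _ m, hmin, hmin, ← mul_sub, abs_mul,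
    abs_of_nonneg hm]
  ring

lemma two_mul_conductance_mul_le_sum_sum_mul_abs_sub (hsym : ∀ u v, w u v = w v u)
    (a : V → ℝ) (ha : ∀ v, 0 ≤ a v) (hsupp : 2 * vol w (univ.filter (a · ≠ 0)) ≤ vol w univ) :
    2 * conductance w * ∑ v, degRe w v * a v ≤ ∑ u, ∑ v, (w u v : ℝ) * |a u - a v| := by
  induction hn : (univ.filter (a · ≠ 0)).card using Nat.strong_induction_on generalizing a
    with | _ n ih => ?_
  set S := univ.filter (a · ≠ 0)
  rcases S.eq_empty_or_nonempty with hS | hS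
  · have ha0 : ∀ v, a v = 0 := fun v => by
      by_contra hv
      exact (eq_empty_iff_forall_notMem.1 hS) v (by simp [S, hv])
    simp [ha0]
  obtain ⟨v₀, hv₀S, hv₀⟩ := S.exists_min_image a hS
  set m := a v₀
  have hm : 0 < m := lt_of_le_of_ne (ha v₀) (Ne.symm (mem_filter.1 hv₀S).2)
  have hmin : ∀ v, min (a v) m = m * (if v ∈ S then 1 else 0) := by
    intro v
    by_cases hv : v ∈ S
    · simp [hv, hv₀ v hv]
    · have : a v = 0 := by simpa [S] using hv
      simp [hv, this, hm.le]
  set a' := fun v => max (a v - m) 0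
  have ha'S : univ.filter (a' · ≠ 0) ⊆ S.erase v₀ := by
    intro v hv
    have : m < a v := by simpa [a'] using hv
    refine mem_erase.2 ⟨fun h => by simp [h, m] at this, ?_⟩
    simpa [S] using (hm.trans this).ne'
  have ih' := ih _ ((card_le_card ha'S).trans_lt (card_erase_lt_of_mem hv₀S) |>.trans_eq hn)
    a' (fun v => le_max_right _ _)
    ((mul_le_mul_of_nonneg_left (vol_mono w (ha'S.trans (erase_subset _ _))) two_pos.le).trans
      hsupp) rfl
  rw [sum_degRe_mul_eq_of_min_eq w hmin, sum_sum_mul_abs_sub_eq_of_min_eq w hsym hm.le hmin]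
  have hcut := conductance_mul_vol_le_cutVal w hsupp
  nlinarith

lemma conductance_sq_le_two_mul_of_dirichletForm_le (hsym : ∀ u v, w u v = w v u) {μ : ℝ}
    (f : V → ℝ) (hsupp : 2 * vol w (univ.filter (f · ≠ 0)) ≤ vol w univ)
    (hpos : 0 < degNormSq w f) (hf : dirichletForm w f ≤ μ * degNormSq w f) :
    conductance w ^ 2 ≤ 2 * μ := by
  have hcoarea := two_mul_conductance_mul_le_sum_sum_mul_abs_sub w hsym (f · ^ 2)
    (fun v => sq_nonneg _) (by simpa using hsupp)
  have hφ := conductance_nonneg w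
  have hsq : (2 * conductance w * degNormSq w f) ^ 2 ≤ 8 * μ * degNormSq w f ^ 2 := calc
    _ ≤ (∑ u, ∑ v, (w u v : ℝ) * |f u ^ 2 - f v ^ 2|) ^ 2 :=
      pow_le_pow_left₀ (by positivity) hcoarea 2
    _ ≤ 8 * dirichletForm w f * degNormSq w f := sq_sum_sum_mul_abs_sq_sub_sq_le w hsym f
    _ ≤ 8 * μ * degNormSq w f ^ 2 := by nlinarith
  nlinarith [pow_pos hpos 2]

end

/-- Cheeger's inequality for multigraphs: for a finite connected multigraph, the spectral
gap `λ` of the normalized Laplacian and the conductance `φ` satisfy `λ ≥ φ²/2`. -/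
theorem cheeger_multigraph {V : Type} [Fintype V] [DecidableEq V]
    (w : V → V → ℕ) (hsym : ∀ u v, w u v = w v u)
    (G : SimpleGraph V) (hG : ∀ u v, G.Adj u v ↔ u ≠ v ∧ 0 < w u v)
    (hconn : G.Connected)
    (hL : (normLap w).IsHermitian) :
    conductance w ^ 2 / 2 ≤ secondSmallest hL := by
  rcases le_or_gt (Fintype.card V) 1 with hcard | hcard
  · rw [conductance_eq_zero_of_card_le_one w hcard, secondSmallest_eq_zero_of_card_le_one hL hcard]
    norm_num
  have : Nonempty V := hconn.nonempty
  have hd := degRe_pos_of_connected w (fun u v huv => ((hG u v).1 huv).2) hconn hcard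
  obtain ⟨g, hg₀, hgpos, hg⟩ := exists_dirichletForm_le_secondSmallest w hsym hd hL hcard
  obtain ⟨f, hsupp, hfpos, hf⟩ := exists_half_support_dirichletForm_le w g hg₀ hgpos hg
  linarith [conductance_sq_le_two_mul_of_dirichletForm_le w hsym f hsupp hfpos hf]
end
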